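/- arXiv:2111.07851 — 3 statements merged into one kernel-verified Lean document; each statement's English description precedes it below -/
import Mathlib

section
/- Let X be a Banach space, p ∈ [1, ∞), Λ an arbitrary index set, and let {T_λ : λ ∈ Λ} ⊆ B(X) be a family of bounded linear operators that is R-bounded with R_p-bound ρ := R_p({T_λ : λ ∈ Λ}) < 1. Then for every λ ∈ Λ the operator I − T_λ is invertible in B(X) (with inverse given by the Neumann series Σ_{ν=0}^∞ T_λ^ν), and the family of inverses {(I − T_λ)^{−1} : λ ∈ Λ} is R-bounded with R_p-bound at most 1/(1 − ρ). -/
open scoped BigOperators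

noncomputable section

/-- The discrete Rademacher average `(2^{-N} ∑_{ε ∈ {−1,1}^N} ‖∑_ν ε_ν v_ν‖^p)^{1/p}`. -/
def radAvg {Y : Type*} [NormedAddCommGroup Y] (p : ℝ) {N : ℕ} (v : Fin N → Y) : ℝ :=
  (((2 : ℝ) ^ N)⁻¹ * ∑ ε : Fin N → Bool, ‖∑ ν, (if ε ν then v ν else -v ν)‖ ^ p) ^ p⁻¹

/-- A family `T` of bounded operators is R-bounded with `R_p`-bound at most `C`. -/
def IsRBoundedWith {X Y : Type*} [NormedAddCommGroup X] [NormedSpace ℂ X]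
    [NormedAddCommGroup Y] [NormedSpace ℂ Y]
    (p : ℝ) (T : Set (X →L[ℂ] Y)) (C : ℝ) : Prop :=
  ∀ (N : ℕ) (t : Fin N → X →L[ℂ] Y), (∀ ν, t ν ∈ T) → ∀ x : Fin N → X,
    radAvg p (fun ν => t ν (x ν)) ≤ C * radAvg p x

/-- A family of bounded operators is R-bounded. -/
def IsRBounded {X Y : Type*} [NormedAddCommGroup X] [NormedSpace ℂ X]
    [NormedAddCommGroup Y] [NormedSpace ℂ Y] (p : ℝ) (T : Set (X →L[ℂ] Y)) : Prop :=
  ∃ C, 0 ≤ C ∧ IsRBoundedWith p T C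

/-- The `R_p`-bound of a family of bounded operators. -/
def rBound {X Y : Type*} [NormedAddCommGroup X] [NormedSpace ℂ X]
    [NormedAddCommGroup Y] [NormedSpace ℂ Y] (p : ℝ) (T : Set (X →L[ℂ] Y)) : ℝ :=
  sInf {C | 0 ≤ C ∧ IsRBoundedWith p T C}

/-! An `R_p`-bound dominates the operator norm (test it on a single vector), so `‖T_λ‖ ≤ ρ < 1`
and the Neumann series converges. `R_p`-bounds are submultiplicative, so the powers `T_λ^k` have
`R_p`-bound `ρ^k`. The Rademacher average is a scaled `ℓ^p` norm of the vector of signed sums,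
hence subadditive and continuous, so summing over `k` and passing to the limit bounds the inverses
by `∑ ρ^k = 1/(1-ρ)`. -/

open Filter Topology
open scoped Pointwise

section RademacherAverage

variable {Y : Type*} [NormedAddCommGroup Y] {p : ℝ} {N : ℕ}

def signedSums : (Fin N → Y) →+ ((Fin N → Bool) → Y) where
  toFun v ε := ∑ ν, if ε ν then v ν else -v ν
  map_zero' := by ext; simp
  map_add' v w := by
    ext ε
    simp only [Pi.add_apply, ← Finset.sum_add_distrib]
    refine Finset.sum_congr rfl fun ν _ => ?_
    split_ifs <;> abel

lemma radAvg_eq_norm_toLp (hp : 0 < p) (v : Fin N → Y) :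
    radAvg p v = ((2 : ℝ) ^ N)⁻¹ ^ p⁻¹ * ‖WithLp.toLp (ENNReal.ofReal p) (signedSums v)‖ := by
  have hp' : 0 < (ENNReal.ofReal p).toReal := by rwa [ENNReal.toReal_ofReal hp.le]
  rw [radAvg, PiLp.norm_eq_sum hp', ENNReal.toReal_ofReal hp.le, one_div,
    Real.mul_rpow (by positivity) (by positivity)]
  rfl

lemma radAvg_nonneg (p : ℝ) (v : Fin N → Y) : 0 ≤ radAvg p v :=
  Real.rpow_nonneg (by positivity) _

lemma radAvg_fin_one (hp : 0 < p) (y : Y) : radAvg p (fun _ : Fin 1 => y) = ‖y‖ := by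
  have hsum : ∑ ε : Fin 1 → Bool, ‖∑ ν : Fin 1, (if ε ν then y else -y)‖ ^ p = 2 * ‖y‖ ^ p := by
    rw [← (Equiv.funUnique (Fin 1) Bool).symm.sum_comp]
    simp [two_mul]
  rw [radAvg, hsum, pow_one, inv_mul_cancel_left₀ two_ne_zero,
    Real.rpow_rpow_inv (norm_nonneg y) hp.ne']

lemma radAvg_sum_le (hp : 1 ≤ p) {ι : Type*} (s : Finset ι) (v : ι → Fin N → Y) :
    radAvg p (∑ k ∈ s, v k) ≤ ∑ k ∈ s, radAvg p (v k) := by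
  have : Fact (1 ≤ ENNReal.ofReal p) := ⟨by simpa using hp⟩
  simp only [radAvg_eq_norm_toLp (one_pos.trans_le hp), map_sum, WithLp.toLp_sum,
    ← Finset.mul_sum]
  gcongr
  exact norm_sum_le _ _

lemma continuous_radAvg (hp : 1 ≤ p) : Continuous (radAvg p : (Fin N → Y) → ℝ) := by
  have : Fact (1 ≤ ENNReal.ofReal p) := ⟨by simpa using hp⟩
  simp only [funext (radAvg_eq_norm_toLp (Y := Y) (N := N) (one_pos.trans_le hp))]
  refine continuous_const.mul (continuous_norm.comp (PiLp.continuous_toLp _ _ |>.comp ?_))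
  refine continuous_pi fun ε => ?_
  change Continuous fun v : Fin N → Y => ∑ ν, if ε ν then v ν else -v ν
  exact continuous_finsetSum _ fun ν _ => by split <;> fun_prop

end RademacherAverage

section RBounded

variable {X Y : Type*} [NormedAddCommGroup X] [NormedSpace ℂ X] [NormedAddCommGroup Y]
  [NormedSpace ℂ Y] {p C : ℝ}

lemma isClosed_setOf_isRBoundedWith (p : ℝ) (T : Set (X →L[ℂ] Y)) :
    IsClosed {C | IsRBoundedWith p T C} := by
  simp only [IsRBoundedWith, Set.ofPred_forall]
  exact isClosed_iInter fun N => isClosed_iInter fun t => isClosed_iInter fun _ =>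
    isClosed_iInter fun x => isClosed_le continuous_const (continuous_id.mul continuous_const)

lemma IsRBounded.rBound_mem {T : Set (X →L[ℂ] Y)} (hT : IsRBounded p T) :
    rBound p T ∈ {C | 0 ≤ C ∧ IsRBoundedWith p T C} :=
  (isClosed_Ici.inter (isClosed_setOf_isRBoundedWith p T)).csInf_mem hT ⟨0, fun _ hC => hC.1⟩

lemma IsRBoundedWith.norm_le {T : Set (X →L[ℂ] Y)} (hT : IsRBoundedWith p T C) (hp : 0 < p)
    (hC : 0 ≤ C) {S : X →L[ℂ] Y} (hS : S ∈ T) : ‖S‖ ≤ C :=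
  S.opNorm_le_bound hC fun x => by
    simpa only [radAvg_fin_one hp] using hT 1 (fun _ => S) (fun _ => hS) (fun _ => x)

lemma isRBoundedWith_one (p : ℝ) : IsRBoundedWith p (1 : Set (X →L[ℂ] X)) 1 := by
  intro N t ht x
  simp only [Set.mem_one] at ht
  simp [ht]

lemma IsRBoundedWith.mul {T U : Set (X →L[ℂ] X)} {D : ℝ} (hT : IsRBoundedWith p T C)
    (hU : IsRBoundedWith p U D) (hC : 0 ≤ C) : IsRBoundedWith p (T * U) (C * D) := by
  intro N t ht x
  choose a ha b hb hab using fun ν => Set.mem_mul.1 (ht ν)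
  calc radAvg p (fun ν => t ν (x ν)) = radAvg p (fun ν => a ν (b ν (x ν))) := by
        simp only [← hab]; rfl
    _ ≤ C * radAvg p (fun ν => b ν (x ν)) := hT N a ha _
    _ ≤ C * (D * radAvg p x) := by gcongr; exact hU N b hb x
    _ = C * D * radAvg p x := (mul_assoc _ _ _).symm

lemma IsRBoundedWith.pow {T : Set (X →L[ℂ] X)} (hT : IsRBoundedWith p T C) (hC : 0 ≤ C) :
    ∀ k : ℕ, IsRBoundedWith p (T ^ k) (C ^ k)
  | 0 => by simpa using isRBoundedWith_one p
  | k + 1 => by simpa only [pow_succ] using (hT.pow hC k).mul hT (pow_nonneg hC k)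

lemma IsRBoundedWith.image_tsum_pow [CompleteSpace X] {T : Set (X →L[ℂ] X)} (hp : 1 ≤ p)
    (hT : IsRBoundedWith p T C) (hC₀ : 0 ≤ C) (hC₁ : C < 1) :
    IsRBoundedWith p ((fun S => ∑' k : ℕ, S ^ k) '' T) (1 - C)⁻¹ := by
  intro N t ht x
  choose s hsT hst using ht
  have hpartial (M : ℕ) :
      radAvg p (∑ k ∈ Finset.range M, fun ν => (s ν ^ k) (x ν)) ≤ (1 - C)⁻¹ * radAvg p x :=
    calc _ ≤ ∑ k ∈ Finset.range M, radAvg p (fun ν => (s ν ^ k) (x ν)) := radAvg_sum_le hp _ _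
      _ ≤ ∑ k ∈ Finset.range M, C ^ k * radAvg p x := Finset.sum_le_sum fun k _ =>
          hT.pow hC₀ k N (fun ν => s ν ^ k) (fun ν => Set.pow_mem_pow (hsT ν)) x
      _ = (∑ k ∈ Finset.range M, C ^ k) * radAvg p x := (Finset.sum_mul ..).symm
      _ ≤ (1 - C)⁻¹ * radAvg p x := by
          gcongr
          · exact radAvg_nonneg p x
          · exact ((summable_geometric_of_lt_one hC₀ hC₁).sum_le_tsum _
              fun k _ => pow_nonneg hC₀ k).trans_eq (tsum_geometric_of_lt_one hC₀ hC₁)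
  have htendsto : Tendsto (fun M => ∑ k ∈ Finset.range M, fun ν => (s ν ^ k) (x ν)) atTop
      (𝓝 fun ν => t ν (x ν)) := by
    refine tendsto_pi_nhds.2 fun ν => ?_
    simp only [Finset.sum_apply, ← hst ν]
    have hnorm : ‖s ν‖ < 1 := (hT.norm_le (one_pos.trans_le hp) hC₀ (hsT ν)).trans_lt hC₁
    exact ((summable_geometric_of_norm_lt_one hnorm).hasSum.mapL
      (ContinuousLinearMap.apply ℂ X (x ν))).tendsto_sum_nat
  exact le_of_tendsto' ((continuous_radAvg hp).tendsto _ |>.comp htendsto) hpartial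

end RBounded

/-- If `{T_λ : λ ∈ Λ}` is R-bounded with `R_p`-bound `ρ < 1`, then every
`I − T_λ` is invertible, with inverse given by the Neumann series `∑ T_λ^ν`, and the family of
inverses is R-bounded with `R_p`-bound at most `1/(1−ρ)`. -/
theorem stmt1 {X : Type*} [NormedAddCommGroup X] [NormedSpace ℂ X] [CompleteSpace X]
    (p : ℝ) (hp : 1 ≤ p) {Λ : Type*} (T : Λ → X →L[ℂ] X)
    (hRB : IsRBounded p (Set.range T))
    (hρ : rBound p (Set.range T) < 1) :
    (∀ l : Λ, IsUnit (1 - T l)) ∧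
      (∀ l : Λ, Ring.inverse (1 - T l) = ∑' ν : ℕ, T l ^ ν) ∧
      IsRBoundedWith p {S | ∃ l : Λ, S = Ring.inverse (1 - T l)}
        (1 / (1 - rBound p (Set.range T))) := by
  obtain ⟨hρ₀, hρT⟩ := hRB.rBound_mem
  have hnorm (l : Λ) : ‖T l‖ < 1 :=
    (hρT.norm_le (one_pos.trans_le hp) hρ₀ ⟨l, rfl⟩).trans_lt hρ
  have hinv (l : Λ) : Ring.inverse (1 - T l) = ∑' ν : ℕ, T l ^ ν :=
    (geom_series_eq_inverse _ (hnorm l)).symm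
  refine ⟨fun l => isUnit_one_sub_of_norm_lt_one (hnorm l), hinv, ?_⟩
  have hinverses : {S | ∃ l : Λ, S = Ring.inverse (1 - T l)} =
      (fun S => ∑' ν : ℕ, S ^ ν) '' Set.range T := by
    ext S
    simp [hinv, eq_comm]
  rw [hinverses, one_div]
  exact hρT.image_tsum_pow hp hρ₀ hρ

end
end

section
/- Let E be a complex Banach space, n, k ≥ 1 integers, and a_α ∈ B(E) for each multi-index α ∈ ℕ₀^n with |α| = k. Define the operator-valued homogeneous polynomial 𝒜 : ℂ^n → B(E) by 𝒜(z) = Σ_{|α|=k} z^α a_α (where z^α = Π_i z_i^{α_i}). Suppose 𝒜 is parameter-elliptic with angle φ ∈ [0, π), i.e. the spectrum σ(𝒜(ξ)) ⊆ Σ_φ for every ξ ∈ ℝ^n with |ξ| = 1. Then for every φ′ ∈ (φ, π) there exists ε > 0 such that for all ξ ∈ ℝ^n \ {0} and all η ∈ ℝ^n with |η| ≤ ε·|ξ|, the spectrum of the complex-argument operator satisfies σ(𝒜(ξ + i·η)) ⊆ Σ_{φ′}. -/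
noncomputable section

/-- The open sector `Σ_θ`: for `θ > 0` it is `{z ≠ 0 : |arg z| < θ}`, and `Σ_0 = (0,∞)`. -/
def sector0 (θ : ℝ) : Set ℂ :=
  if θ = 0 then {z : ℂ | z ≠ 0 ∧ Complex.arg z = 0}
  else {z : ℂ | z ≠ 0 ∧ |Complex.arg z| < θ}

/-- The finite set of multi-indices `α ∈ ℕ₀^n` with `|α| = k`. -/
def multiIndexDeg (n k : ℕ) : Finset (Fin n → ℕ) :=
  (Fintype.piFinset fun _ : Fin n => Finset.range (k + 1)).filter fun α => ∑ i, α i = k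

open Complex Metric Set Filter

theorem sector0_isOpen {θ : ℝ} (h0 : 0 < θ) (hπ : θ < Real.pi) : IsOpen (sector0 θ) := by
  rw [sector0, if_neg h0.ne']
  rw [isOpen_iff_mem_nhds]
  rintro x ⟨hx0, hxa⟩
  have hslit : x ∈ slitPlane := by
    rw [mem_slitPlane_iff_arg]
    refine ⟨fun h => ?_, hx0⟩
    rw [h] at hxa
    rw [_root_.abs_of_nonneg Real.pi_pos.le] at hxa
    linarith
  have e1 : ∀ᶠ z in nhds x, z ≠ (0 : ℂ) := eventually_ne_nhds hx0
  have e2 : ∀ᶠ z in nhds x, |Complex.arg z| < θ :=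
    ((continuousAt_arg hslit).abs).eventually_lt continuousAt_const hxa
  exact e1.and e2

theorem sector0_mono {θ θ' : ℝ} (h0 : 0 ≤ θ) (h : θ < θ') : sector0 θ ⊆ sector0 θ' := by
  have hθ' : θ' ≠ 0 := (h0.trans_lt h).ne'
  intro z hz
  rw [sector0] at hz ⊢
  rw [if_neg hθ']
  by_cases hθ : θ = 0
  · rw [if_pos hθ] at hz
    exact ⟨hz.1, by rw [hz.2]; simpa using lt_of_le_of_lt h0 h⟩
  · rw [if_neg hθ] at hz
    exact ⟨hz.1, hz.2.trans h⟩

theorem sector0_real_mul_mem {θ : ℝ} {t : ℝ} (ht : 0 < t) {z : ℂ} (hz : z ∈ sector0 θ) :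
    (t : ℂ) * z ∈ sector0 θ := by
  have hne : (t : ℂ) * z ≠ 0 := by
    rw [sector0] at hz; split_ifs at hz <;>
      exact mul_ne_zero (ofReal_ne_zero.mpr ht.ne') hz.1
  have harg : Complex.arg ((t : ℂ) * z) = Complex.arg z := Complex.arg_real_mul z ht
  rw [sector0] at hz ⊢
  split_ifs at hz ⊢ with hθ
  · exact ⟨hne, by rw [harg]; exact hz.2⟩
  · exact ⟨hne, by rw [harg]; exact hz.2⟩

theorem spectrum_usc {B : Type*} [NormedRing B] [NormedAlgebra ℂ B] [CompleteSpace B]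
    (T₀ : B) {V : Set ℂ} (hV : IsOpen V) (h : spectrum ℂ T₀ ⊆ V) :
    ∀ᶠ T in nhds T₀, spectrum ℂ T ⊆ V := by
  let R : ℝ := (‖T₀‖ + 1) * ‖(1 : B)‖
  let C : Set ℂ := Metric.closedBall 0 R \ V
  have hCcomp : IsCompact C := (isCompact_closedBall _ _).diff hV
  have hWopen : IsOpen {p : ℂ × B | IsUnit (algebraMap ℂ B p.1 - p.2)} := by
    have hc : Continuous fun p : ℂ × B => algebraMap ℂ B p.1 - p.2 :=
      ((continuous_algebraMap ℂ B).comp continuous_fst).sub continuous_snd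
    exact Units.isOpen.preimage hc
  have hsub : C ×ˢ ({T₀} : Set B) ⊆ {p : ℂ × B | IsUnit (algebraMap ℂ B p.1 - p.2)} := by
    rintro ⟨z, T⟩ ⟨hz, hT⟩
    simp only [Set.mem_singleton_iff] at hT
    rw [hT]
    have hzs : z ∉ spectrum ℂ T₀ := fun hzs => hz.2 (h hzs)
    simpa [spectrum.mem_iff, not_not] using hzs
  obtain ⟨u, v, hu, hv, hCu, hT₀v, huv⟩ :=
    generalized_tube_lemma hCcomp isCompact_singleton hWopen hsub
  have h1 : ∀ᶠ T in nhds T₀, T ∈ v := hv.mem_nhds (hT₀v rfl)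
  have h2 : ∀ᶠ T in nhds T₀, ‖T‖ < ‖T₀‖ + 1 :=
    (continuous_norm.continuousAt (x := T₀)).eventually_lt continuousAt_const (by linarith)
  filter_upwards [h1, h2] with T hTv hTn
  intro z hz
  by_contra hzV
  have hzC : z ∈ C := by
    refine ⟨?_, hzV⟩
    have h3 := spectrum.subset_closedBall_norm_mul T hz
    rw [Metric.mem_closedBall] at h3 ⊢
    exact h3.trans (mul_le_mul_of_nonneg_right hTn.le (norm_nonneg _))
  have h4 := huv (Set.mk_mem_prod (hCu hzC) hTv)
  simp only [Set.mem_setOf_eq] at h4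
  exact spectrum.mem_iff.mp hz h4

/-- If the homogeneous operator-valued polynomial
`𝒜(z) = ∑_{|α|=k} z^α a_α` is parameter-elliptic with angle `φ`, i.e.
`σ(𝒜(ξ)) ⊆ Σ_φ` for all real unit vectors `ξ`, then for every `φ' ∈ (φ, π)` there is `ε > 0`
such that `σ(𝒜(ξ + iη)) ⊆ Σ_{φ'}` for all `ξ ∈ ℝ^n \ {0}` and `|η| ≤ ε|ξ|`. -/
theorem stmt15 {E : Type*} [NormedAddCommGroup E] [NormedSpace ℂ E] [CompleteSpace E]
    (n k : ℕ) (hn : 1 ≤ n) (hk : 1 ≤ k)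
    (a : (Fin n → ℕ) → E →L[ℂ] E)
    (φ : ℝ) (hφ : φ ∈ Set.Ico 0 Real.pi)
    (hell : ∀ ξ : EuclideanSpace ℝ (Fin n), ‖ξ‖ = 1 →
      spectrum ℂ (∑ α ∈ multiIndexDeg n k, (∏ i, ((ξ i : ℂ)) ^ α i) • a α) ⊆ sector0 φ) :
    ∀ φ' ∈ Set.Ioo φ Real.pi, ∃ ε > 0,
      ∀ ξ : EuclideanSpace ℝ (Fin n), ξ ≠ 0 →
        ∀ η : EuclideanSpace ℝ (Fin n), ‖η‖ ≤ ε * ‖ξ‖ →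
          spectrum ℂ (∑ α ∈ multiIndexDeg n k,
              (∏ i, ((ξ i : ℂ) + Complex.I * (η i : ℂ)) ^ α i) • a α) ⊆ sector0 φ' := by
  rintro φ' ⟨hφ'1, hφ'2⟩
  set P : (Fin n → ℂ) → (E →L[ℂ] E) :=
    fun z => ∑ α ∈ multiIndexDeg n k, (∏ i, z i ^ α i) • a α with hPdef
  have hPcont : Continuous P :=
    continuous_finset_sum _ fun α _ =>
      (continuous_finset_prod _ fun i _ => ((continuous_apply i).pow _)).smul continuous_const
  have hhom : ∀ (c : ℂ) (z : Fin n → ℂ), P (fun i => c * z i) = c ^ k • P z := by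
    intro c z
    rw [hPdef]
    simp only
    rw [Finset.smul_sum]
    refine Finset.sum_congr rfl fun α hα => ?_
    have hαk : ∑ i, α i = k := (Finset.mem_filter.mp hα).2
    rw [smul_smul]
    congr 1
    calc ∏ i, (c * z i) ^ α i = (∏ i, c ^ α i) * ∏ i, z i ^ α i := by
          rw [← Finset.prod_mul_distrib]; exact Finset.prod_congr rfl fun i _ => mul_pow _ _ _
      _ = c ^ k * ∏ i, z i ^ α i := by rw [Finset.prod_pow_eq_pow_sum, hαk]
  have hφ'0 : 0 < φ' := lt_of_le_of_lt hφ.1 hφ'1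
  have hopen : IsOpen (sector0 φ') := sector0_isOpen hφ'0 hφ'2
  set f : EuclideanSpace ℝ (Fin n) × EuclideanSpace ℝ (Fin n) → (E →L[ℂ] E) :=
    fun p => P (fun i => (p.1 i : ℂ) + Complex.I * (p.2 i : ℂ)) with hfdef
  have hfc : Continuous f := by
    apply hPcont.comp
    apply continuous_pi
    intro i
    exact (Complex.continuous_ofReal.comp ((continuous_apply i).comp ((PiLp.continuous_ofLp 2 _).comp continuous_fst))).add
      (continuous_const.mul
        (Complex.continuous_ofReal.comp ((continuous_apply i).comp ((PiLp.continuous_ofLp 2 _).comp continuous_snd))))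
  set G : Set (EuclideanSpace ℝ (Fin n) × EuclideanSpace ℝ (Fin n)) :=
    {p | spectrum ℂ (f p) ⊆ sector0 φ'} with hGdef
  have hSsub : Metric.sphere (0 : EuclideanSpace ℝ (Fin n)) 1 ×ˢ
      ({0} : Set (EuclideanSpace ℝ (Fin n))) ⊆ interior G := by
    rintro ⟨ξ, η⟩ ⟨hξ, hη⟩
    simp only [Set.mem_singleton_iff] at hη
    rw [mem_interior_iff_mem_nhds]
    have hξ1 : ‖ξ‖ = 1 := by simpa using hξ
    have h0 : f (ξ, η) = P (fun i => (ξ i : ℂ)) := by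
      rw [hη, hfdef]
      simp
    have hspec : spectrum ℂ (f (ξ, η)) ⊆ sector0 φ' := by
      rw [h0]
      exact (hell ξ hξ1).trans (sector0_mono hφ.1 hφ'1)
    have husc := spectrum_usc (f (ξ, η)) hopen hspec
    exact (hfc.continuousAt).eventually husc
  have hScomp : IsCompact (Metric.sphere (0 : EuclideanSpace ℝ (Fin n)) 1 ×ˢ
      ({0} : Set (EuclideanSpace ℝ (Fin n)))) :=
    (isCompact_sphere _ _).prod isCompact_singleton
  obtain ⟨δ, hδ, hthick⟩ := hScomp.exists_thickening_subset_open isOpen_interior hSsub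
  refine ⟨δ / 2, by positivity, ?_⟩
  intro ξ hξ η hη
  have ht : (0 : ℝ) < ‖ξ‖ := norm_pos_iff.mpr hξ
  set t : ℝ := ‖ξ‖ with htdef
  set ξ' : EuclideanSpace ℝ (Fin n) := t⁻¹ • ξ with hξ'def
  set η' : EuclideanSpace ℝ (Fin n) := t⁻¹ • η with hη'def
  have htinv : (0 : ℝ) < t⁻¹ := inv_pos.mpr ht
  have hξ'1 : ‖ξ'‖ = 1 := by
    rw [hξ'def, norm_smul, Real.norm_eq_abs, abs_of_pos htinv]
    field_simp
    exact htdef.symm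
  have hη'le : ‖η'‖ ≤ δ / 2 := by
    rw [hη'def, norm_smul, Real.norm_eq_abs, abs_of_pos htinv]
    calc t⁻¹ * ‖η‖ ≤ t⁻¹ * (δ / 2 * t) := by
          exact mul_le_mul_of_nonneg_left hη htinv.le
      _ = δ / 2 := by field_simp
  have hmem : (ξ', η') ∈ Metric.thickening δ (Metric.sphere (0 : EuclideanSpace ℝ (Fin n)) 1 ×ˢ
      ({0} : Set (EuclideanSpace ℝ (Fin n)))) := by
    rw [Metric.mem_thickening_iff]
    refine ⟨(ξ', 0), Set.mk_mem_prod (by simpa using hξ'1) rfl, ?_⟩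
    rw [Prod.dist_eq]
    simp only [dist_self, dist_zero_right]
    rw [max_eq_right (norm_nonneg _)]
    exact lt_of_le_of_lt hη'le (by linarith)
  have hmemG : (ξ', η') ∈ G := interior_subset (hthick hmem)
  have hsub' : spectrum ℂ (P (fun i => (ξ' i : ℂ) + Complex.I * (η' i : ℂ))) ⊆ sector0 φ' :=
    hmemG
  have htne : (t : ℂ) ≠ 0 := Complex.ofReal_ne_zero.mpr ht.ne'
  have hPz : P (fun i => (ξ i : ℂ) + Complex.I * (η i : ℂ))
      = ((t : ℂ)) ^ k • P (fun i => (ξ' i : ℂ) + Complex.I * (η' i : ℂ)) := by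
    rw [← hhom]
    congr 1
    funext i
    have h1 : (ξ' i : ℂ) = (t : ℂ)⁻¹ * (ξ i : ℂ) := by
      rw [hξ'def]
      push_cast [PiLp.smul_apply, smul_eq_mul]
      ring
    have h2 : (η' i : ℂ) = (t : ℂ)⁻¹ * (η i : ℂ) := by
      rw [hη'def]
      push_cast [PiLp.smul_apply, smul_eq_mul]
      ring
    rw [h1, h2]
    field_simp
  have htk : ((t : ℂ)) ^ k ≠ 0 := pow_ne_zero _ htne
  intro w hw
  rw [show (∑ α ∈ multiIndexDeg n k,
      (∏ i, ((ξ i : ℂ) + Complex.I * (η i : ℂ)) ^ α i) • a α)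
      = P (fun i => (ξ i : ℂ) + Complex.I * (η i : ℂ)) from rfl, hPz] at hw
  rw [show ((t : ℂ)) ^ k • P (fun i => (ξ' i : ℂ) + Complex.I * (η' i : ℂ))
      = (Units.mk0 ((t : ℂ) ^ k) htk) • P (fun i => (ξ' i : ℂ) + Complex.I * (η' i : ℂ))
      from rfl] at hw
  rw [spectrum.unit_smul_eq_smul] at hw
  obtain ⟨v, hv, rfl⟩ := hw
  show ((t : ℂ)) ^ k • v ∈ sector0 φ'
  have hre : ((t : ℂ)) ^ k • v = ((t ^ k : ℝ) : ℂ) * v := by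
    push_cast
    rw [smul_eq_mul]
  rw [hre]
  exact sector0_real_mul_mem (pow_pos ht k) (hsub' hv)


end
end

section
/- Fix integers n, m ≥ 1 and a real number λ > 0. For every multi-index α ∈ ℕ₀^n there exists a constant C_α > 0 (depending only on α, n, m, λ) such that for all integers k ≥ 1, all μ > 0 and all ξ ∈ ℝ^n: |ξ^α · ∂_ξ^α [ μ^k · (μ + (λ + |ξ|^{2m})^{1/(2m)})^{−k} ]| ≤ C_α, where the bound is uniform in k, μ and ξ. (These are the Mikhlin-type multiplier estimates for the k-th powers of the resolvent symbol of the pseudo-differential operator (λ + (−Δ)^m)^{1/(2m)}.) -/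
noncomputable section

/-- The multi-index partial derivative `∂^α = ∂₁^{α₁} ⋯ ∂ₙ^{αₙ}` of a function on
Euclidean space. -/
def mderivE {n : ℕ} {F : Type*} [NormedAddCommGroup F] [NormedSpace ℝ F]
    (β : Fin n → ℕ) (f : EuclideanSpace ℝ (Fin n) → F) : EuclideanSpace ℝ (Fin n) → F :=
  (List.finRange n).foldr
    (fun i g =>
      (fun (h : EuclideanSpace ℝ (Fin n) → F) (x : EuclideanSpace ℝ (Fin n)) =>
        fderiv ℝ h x (EuclideanSpace.single i (1 : ℝ)))^[β i] g) f

namespace Stmt16Aux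

open Real

variable {n : ℕ}

/-- Predicate: `p` is a polynomial function of (total) degree at most `d` on `ℝⁿ`. -/
inductive IsPoly : ℤ → (EuclideanSpace ℝ (Fin n) → ℝ) → Prop
  | zero (d : ℤ) : IsPoly d (fun _ => 0)
  | const (c : ℝ) : IsPoly 0 (fun _ => c)
  | coord (i : Fin n) : IsPoly 1 (fun ξ => ξ i)
  | add {d : ℤ} {p q : EuclideanSpace ℝ (Fin n) → ℝ} :
      IsPoly d p → IsPoly d q → IsPoly d (fun ξ => p ξ + q ξ)
  | mul {d₁ d₂ : ℤ} {p q : EuclideanSpace ℝ (Fin n) → ℝ} :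
      IsPoly d₁ p → IsPoly d₂ q → IsPoly (d₁ + d₂) (fun ξ => p ξ * q ξ)
  | mono {d d' : ℤ} {p : EuclideanSpace ℝ (Fin n) → ℝ} : IsPoly d p → d ≤ d' → IsPoly d' p

theorem IsPoly.congr {d : ℤ} {p q : EuclideanSpace ℝ (Fin n) → ℝ} (h : IsPoly d p)
    (hq : ∀ ξ, p ξ = q ξ) : IsPoly d q := by
  have : p = q := funext hq
  rwa [this] at h

theorem IsPoly.differentiable {d : ℤ} {p : EuclideanSpace ℝ (Fin n) → ℝ} (h : IsPoly d p) :
    Differentiable ℝ p := by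
  induction h with
  | zero d => exact differentiable_const 0
  | const c => exact differentiable_const c
  | coord i => exact (EuclideanSpace.proj (𝕜 := ℝ) i).differentiable
  | add hp hq ihp ihq => exact ihp.add ihq
  | mul hp hq ihp ihq => exact ihp.mul ihq
  | mono hp hle ih => exact ih

theorem IsPoly.fderiv_apply {d : ℤ} {p : EuclideanSpace ℝ (Fin n) → ℝ} (h : IsPoly d p)
    (i : Fin n) :
    IsPoly (d - 1) (fun ξ => fderiv ℝ p ξ (EuclideanSpace.single i (1 : ℝ))) := by
  induction h with
  | zero d =>
      exact (IsPoly.zero (d - 1)).congr (by simp)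
  | const c =>
      exact (IsPoly.zero (0 - 1)).congr (by simp)
  | coord i' =>
      have hp : ∀ ξ : EuclideanSpace ℝ (Fin n),
          fderiv ℝ (fun ξ : EuclideanSpace ℝ (Fin n) => ξ i') ξ
              (EuclideanSpace.single i (1 : ℝ))
            = (EuclideanSpace.single i (1 : ℝ) : EuclideanSpace ℝ (Fin n)) i' := by
        intro ξ
        rw [show (fun ξ : EuclideanSpace ℝ (Fin n) => ξ i')
            = (EuclideanSpace.proj (𝕜 := ℝ) i' : EuclideanSpace ℝ (Fin n) →L[ℝ] ℝ) from rfl,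
          ContinuousLinearMap.fderiv]
        rfl
      exact ((IsPoly.const _).mono (by omega)).congr (fun ξ => (hp ξ).symm)
  | add hp hq ihp ihq =>
      refine (ihp.add ihq).congr (fun ξ => ?_)
      rw [fderiv_fun_add (hp.differentiable ξ) (hq.differentiable ξ)]
      simp
  | mul hp hq ihp ihq =>
      refine (((hp.mul ihq).mono (by omega)).add ((hq.mul ihp).mono (by omega))).congr
        (fun ξ => ?_)
      rw [fderiv_fun_mul (hp.differentiable ξ) (hq.differentiable ξ)]
      simp [mul_comm]
  | mono hp hle ih => exact ih.mono (by omega)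

theorem abs_coord_le_norm (ξ : EuclideanSpace ℝ (Fin n)) (i : Fin n) : |ξ i| ≤ ‖ξ‖ := by
  rw [EuclideanSpace.norm_eq, ← Real.sqrt_sq_eq_abs (ξ i)]
  refine Real.sqrt_le_sqrt ?_
  calc ξ i ^ 2 = ‖ξ i‖ ^ 2 := by rw [Real.norm_eq_abs, sq_abs]
    _ ≤ ∑ j, ‖ξ j‖ ^ 2 :=
        Finset.single_le_sum (f := fun j => ‖ξ j‖ ^ 2) (fun j _ => sq_nonneg _)
          (Finset.mem_univ i)

theorem IsPoly.bound {d : ℤ} {p : EuclideanSpace ℝ (Fin n) → ℝ} (h : IsPoly d p) :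
    ∃ C, 0 ≤ C ∧ ∀ ξ, |p ξ| ≤ C * (1 + ‖ξ‖) ^ d := by
  have hb : ∀ ξ : EuclideanSpace ℝ (Fin n), (1 : ℝ) ≤ 1 + ‖ξ‖ := fun ξ => by
    simpa using norm_nonneg ξ
  have hb0 : ∀ ξ : EuclideanSpace ℝ (Fin n), (0 : ℝ) < 1 + ‖ξ‖ := fun ξ =>
    lt_of_lt_of_le one_pos (hb ξ)
  induction h with
  | zero d =>
      exact ⟨0, le_refl 0, fun ξ => by simp⟩
  | const c =>
      exact ⟨|c|, abs_nonneg c, fun ξ => by simp⟩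
  | coord i =>
      refine ⟨1, zero_le_one, fun ξ => ?_⟩
      have := abs_coord_le_norm ξ i
      have h1 : ‖ξ‖ ≤ 1 + ‖ξ‖ := by linarith [norm_nonneg ξ]
      simpa using this.trans h1
  | @add d p q hp hq ihp ihq =>
      obtain ⟨C₁, hC₁, h₁⟩ := ihp
      obtain ⟨C₂, hC₂, h₂⟩ := ihq
      refine ⟨C₁ + C₂, by positivity, fun ξ => ?_⟩
      calc |p ξ + q ξ| ≤ |p ξ| + |q ξ| := abs_add_le _ _
        _ ≤ C₁ * (1 + ‖ξ‖) ^ d + C₂ * (1 + ‖ξ‖) ^ d := add_le_add (h₁ ξ) (h₂ ξ)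
        _ = (C₁ + C₂) * (1 + ‖ξ‖) ^ d := by ring
  | @mul d₁ d₂ p q hp hq ihp ihq =>
      obtain ⟨C₁, hC₁, h₁⟩ := ihp
      obtain ⟨C₂, hC₂, h₂⟩ := ihq
      refine ⟨C₁ * C₂, by positivity, fun ξ => ?_⟩
      rw [abs_mul, zpow_add₀ (hb0 ξ).ne']
      calc |p ξ| * |q ξ| ≤ (C₁ * (1 + ‖ξ‖) ^ d₁) * (C₂ * (1 + ‖ξ‖) ^ d₂) :=
            mul_le_mul (h₁ ξ) (h₂ ξ) (abs_nonneg _) (by positivity)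
        _ = C₁ * C₂ * ((1 + ‖ξ‖) ^ d₁ * (1 + ‖ξ‖) ^ d₂) := by ring
  | mono hp hle ih =>
      obtain ⟨C, hC, h₁⟩ := ih
      refine ⟨C, hC, fun ξ => (h₁ ξ).trans ?_⟩
      exact mul_le_mul_of_nonneg_left (zpow_le_zpow_right₀ (hb ξ) hle) hC

theorem IsPoly.eq_zero_of_neg {d : ℤ} {p : EuclideanSpace ℝ (Fin n) → ℝ} (h : IsPoly d p)
    (hd : d < 0) : ∀ ξ, p ξ = 0 := by
  induction h with
  | zero d => exact fun ξ => rfl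
  | const c => omega
  | coord i => omega
  | add hp hq ihp ihq => intro ξ; simp only []; rw [ihp hd ξ, ihq hd ξ]; ring
  | @mul d₁ d₂ p q hp hq ihp ihq =>
      intro ξ
      rcases show d₁ < 0 ∨ d₂ < 0 by omega with h1 | h1
      · simp only []; rw [ihp h1 ξ]; ring
      · simp only []; rw [ihq h1 ξ]; ring
  | mono hp hle ih => exact fun ξ => ih (by omega) ξ

section QA

variable (m : ℕ) (lam : ℝ)

def Qf : EuclideanSpace ℝ (Fin n) → ℝ := fun ξ => lam + (∑ l, ξ l * ξ l) ^ m

def r0 : ℝ := (2 * (m : ℝ))⁻¹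

def Af : EuclideanSpace ℝ (Fin n) → ℝ := fun ξ => Qf m lam ξ ^ r0 m

theorem IsPoly.pow {d : ℤ} {p : EuclideanSpace ℝ (Fin n) → ℝ} (h : IsPoly d p) (t : ℕ) :
    IsPoly (d * t) (fun ξ => p ξ ^ t) := by
  induction t with
  | zero => exact ((IsPoly.const 1).mono (by simp)).congr (by simp)
  | succ t ih =>
      refine ((ih.mul h).mono (by push_cast; ring_nf; omega)).congr (fun ξ => ?_)
      simp [pow_succ]

theorem isPoly_sumsq : IsPoly 2 (fun ξ : EuclideanSpace ℝ (Fin n) => ∑ l, ξ l * ξ l) := by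
  have : ∀ s : Finset (Fin n),
      IsPoly 2 (fun ξ : EuclideanSpace ℝ (Fin n) => ∑ l ∈ s, ξ l * ξ l) := by
    intro s
    induction s using Finset.induction_on with
    | empty => exact ((IsPoly.zero 2).congr (by simp))
    | @insert a s hnot ih =>
        refine ((((IsPoly.coord a).mul (IsPoly.coord a)).add ih).congr (fun ξ => ?_))
        rw [Finset.sum_insert hnot]
  exact this Finset.univ

theorem isPoly_Qf : IsPoly (2 * (m : ℤ)) (Qf (n := n) m lam) := by
  refine ((((IsPoly.const lam).mono (by omega)).add
    ((isPoly_sumsq.pow m).mono (by omega))).congr (fun ξ => rfl))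

variable {m : ℕ} {lam : ℝ}

theorem Qf_pos (hlam : 0 < lam) (ξ : EuclideanSpace ℝ (Fin n)) : 0 < Qf m lam ξ := by
  have h1 : (0:ℝ) ≤ (∑ l, ξ l * ξ l) ^ m :=
    pow_nonneg (Finset.sum_nonneg fun l _ => mul_self_nonneg _) m
  exact add_pos_of_pos_of_nonneg hlam h1

theorem r0_nonneg : 0 ≤ r0 m := by
  unfold r0; positivity

theorem two_m_r0 (hm : 1 ≤ m) : (2 * (m:ℝ)) * r0 m = 1 := by
  unfold r0
  have h : (1:ℝ) ≤ (m:ℝ) := by exact_mod_cast hm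
  rw [mul_inv_cancel₀ (by nlinarith)]

theorem norm_sq_sum (ξ : EuclideanSpace ℝ (Fin n)) : ‖ξ‖ ^ 2 = ∑ l, ξ l * ξ l := by
  rw [EuclideanSpace.norm_eq, Real.sq_sqrt (by positivity)]
  refine Finset.sum_congr rfl (fun l _ => ?_)
  rw [Real.norm_eq_abs, sq_abs, sq]

theorem Af_pos (hlam : 0 < lam) (ξ : EuclideanSpace ℝ (Fin n)) : 0 < Af m lam ξ :=
  Real.rpow_pos_of_pos (Qf_pos hlam ξ) _

theorem norm_le_Af (hm : 1 ≤ m) (hlam : 0 < lam) (ξ : EuclideanSpace ℝ (Fin n)) :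
    ‖ξ‖ ≤ Af m lam ξ := by
  have h1 : ((∑ l, ξ l * ξ l) ^ m : ℝ) ≤ Qf m lam ξ := by
    unfold Qf; linarith
  have h2 : ((∑ l, ξ l * ξ l) ^ m : ℝ) = ‖ξ‖ ^ (2 * m) := by
    rw [← norm_sq_sum, ← pow_mul]
  have h3 : (‖ξ‖ ^ (2 * m) : ℝ) ^ r0 m ≤ Af m lam ξ := by
    unfold Af
    exact Real.rpow_le_rpow (by positivity) (h2 ▸ h1) r0_nonneg
  refine le_trans (le_of_eq ?_) h3
  rw [← Real.rpow_natCast ‖ξ‖ (2 * m), ← Real.rpow_mul (norm_nonneg ξ)]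
  rw [show (((2 * m : ℕ) : ℝ)) = 2 * (m:ℝ) by push_cast; ring, two_m_r0 hm, Real.rpow_one]

theorem a0_le_Af (hlam : 0 < lam) (ξ : EuclideanSpace ℝ (Fin n)) :
    lam ^ r0 m ≤ Af m lam ξ := by
  unfold Af Qf
  refine Real.rpow_le_rpow hlam.le ?_ r0_nonneg
  have : (0:ℝ) ≤ (∑ l, ξ l * ξ l) ^ m :=
    pow_nonneg (Finset.sum_nonneg fun l _ => mul_self_nonneg _) m
  linarith

/-- The directional derivative of `Qf` in direction `i`. -/
def qd (m : ℕ) (lam : ℝ) (i : Fin n) : EuclideanSpace ℝ (Fin n) → ℝ :=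
  fun ξ => fderiv ℝ (Qf m lam) ξ (EuclideanSpace.single i (1 : ℝ))

theorem isPoly_qd (i : Fin n) : IsPoly (2 * (m : ℤ) - 1) (qd (n := n) m lam i) :=
  (isPoly_Qf m lam).fderiv_apply i

theorem Q_rpow_eq (hlam : 0 < lam) (e : ℤ) (ξ : EuclideanSpace ℝ (Fin n)) :
    Qf m lam ξ ^ ((e : ℝ) * r0 m) = Af m lam ξ ^ e := by
  rw [← Real.rpow_intCast (Af m lam ξ) e]
  unfold Af
  rw [← Real.rpow_mul (Qf_pos hlam ξ).le, mul_comm]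

end QA

section Main

variable (m : ℕ) (lam : ℝ)

/-- Data for one term in the representation of derivatives of the symbol. -/
structure TD (n : ℕ) : Type where
  c : ℕ → ℝ
  j : ℕ
  p : EuclideanSpace ℝ (Fin n) → ℝ
  d : ℤ
  e : ℤ

/-- The value of a term. -/
def tval (μ : ℝ) (k : ℕ) (t : TD n) (ξ : EuclideanSpace ℝ (Fin n)) : ℝ :=
  t.c k * (μ ^ k * (μ + Af m lam ξ) ^ (-((k + t.j : ℕ) : ℝ)) * t.p ξ *
    Qf m lam ξ ^ ((t.e : ℝ) * r0 m))

/-- Invariants of a term after `s` differentiations. -/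
def Good (s : ℕ) (t : TD n) : Prop :=
  (∃ B, 0 ≤ B ∧ ∀ k, 1 ≤ k → |t.c k| ≤ B * (k : ℝ) ^ t.j) ∧
    IsPoly t.d t.p ∧ t.d + t.e + (s : ℤ) ≤ (t.j : ℤ)

/-- `F` (a family of functions indexed by `μ` and `k`) is represented by a finite list of
terms that are `Good` at level `s`. -/
def Rep (s : ℕ) (F : ℝ → ℕ → EuclideanSpace ℝ (Fin n) → ℝ) : Prop :=
  ∃ l : List (TD n), (∀ t ∈ l, Good s t) ∧
    ∀ μ : ℝ, 0 < μ → ∀ k : ℕ, 1 ≤ k → ∀ ξ,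
      F μ k ξ = (l.map fun t => tval m lam μ k t ξ).sum

/-- The three terms produced by differentiating a term in direction `i`. -/
def stepTD (i : Fin n) (t : TD n) : List (TD n) :=
  [⟨fun k => (-((k : ℝ) + t.j) * r0 m) * t.c k, t.j + 1,
      fun ξ => t.p ξ * qd m lam i ξ, t.d + (2 * (m : ℤ) - 1), t.e + 1 - 2 * m⟩,
   ⟨t.c, t.j, fun ξ => fderiv ℝ t.p ξ (EuclideanSpace.single i (1 : ℝ)), t.d - 1, t.e⟩,
   ⟨fun k => ((t.e : ℝ) * r0 m) * t.c k, t.j,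
      fun ξ => t.p ξ * qd m lam i ξ, t.d + (2 * (m : ℤ) - 1), t.e - 2 * m⟩]

variable {m lam}

theorem term_hasFDerivAt (hm : 1 ≤ m) (hlam : 0 < lam)
    {p : EuclideanSpace ℝ (Fin n) → ℝ} (hp : Differentiable ℝ p)
    {μ : ℝ} (hμ : 0 < μ) (k j : ℕ) (e : ℤ) (ξ : EuclideanSpace ℝ (Fin n)) :
    ∃ D : EuclideanSpace ℝ (Fin n) →L[ℝ] ℝ,
      HasFDerivAt (fun ζ => μ ^ k * (μ + Af m lam ζ) ^ (-((k + j : ℕ) : ℝ)) * p ζ *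
          Qf m lam ζ ^ ((e : ℝ) * r0 m)) D ξ ∧
      ∀ i : Fin n, D (EuclideanSpace.single i (1 : ℝ)) =
        (-((k : ℝ) + j) * r0 m) *
            (μ ^ k * (μ + Af m lam ξ) ^ (-((k + (j + 1) : ℕ) : ℝ)) *
              (p ξ * qd m lam i ξ) * Qf m lam ξ ^ (((e + 1 - 2 * m : ℤ) : ℝ) * r0 m))
          + μ ^ k * (μ + Af m lam ξ) ^ (-((k + j : ℕ) : ℝ)) *
              (fderiv ℝ p ξ (EuclideanSpace.single i (1 : ℝ))) *
              Qf m lam ξ ^ ((e : ℝ) * r0 m)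
          + ((e : ℝ) * r0 m) *
              (μ ^ k * (μ + Af m lam ξ) ^ (-((k + j : ℕ) : ℝ)) *
                (p ξ * qd m lam i ξ) * Qf m lam ξ ^ (((e - 2 * m : ℤ) : ℝ) * r0 m)) := by
  have hQpos := Qf_pos (m := m) hlam ξ
  have hQd : HasFDerivAt (Qf m lam) (fderiv ℝ (Qf m lam) ξ) ξ :=
    ((isPoly_Qf (n := n) m lam).differentiable ξ).hasFDerivAt
  have hA : HasFDerivAt (Af m lam)
      ((r0 m * Qf m lam ξ ^ (r0 m - 1)) • fderiv ℝ (Qf m lam) ξ) ξ := by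
    unfold Af
    exact hQd.rpow_const (Or.inl hQpos.ne')
  have hMA : HasFDerivAt (fun ζ => μ + Af m lam ζ)
      ((r0 m * Qf m lam ξ ^ (r0 m - 1)) • fderiv ℝ (Qf m lam) ξ) ξ := hA.const_add μ
  have hMApos : 0 < μ + Af m lam ξ := add_pos hμ (Af_pos hlam ξ)
  have hPow : HasFDerivAt (fun ζ => (μ + Af m lam ζ) ^ (-((k + j : ℕ) : ℝ)))
      ((-((k + j : ℕ) : ℝ) * (μ + Af m lam ξ) ^ (-((k + j : ℕ) : ℝ) - 1)) •
        ((r0 m * Qf m lam ξ ^ (r0 m - 1)) • fderiv ℝ (Qf m lam) ξ)) ξ :=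
    hMA.rpow_const (Or.inl hMApos.ne')
  have h1 := hPow.const_mul (μ ^ k)
  have h2 := h1.mul (hp ξ).hasFDerivAt
  have hQe : HasFDerivAt (fun ζ => Qf m lam ζ ^ ((e : ℝ) * r0 m))
      ((((e : ℝ) * r0 m) * Qf m lam ξ ^ ((e : ℝ) * r0 m - 1)) • fderiv ℝ (Qf m lam) ξ) ξ :=
    hQd.rpow_const (Or.inl hQpos.ne')
  have htot := h2.mul hQe
  refine ⟨_, htot, fun i => ?_⟩
  have h2m := two_m_r0 (m := m) hm
  have hr1 : (((e + 1 - 2 * m : ℤ) : ℝ) * r0 m) = (e : ℝ) * r0 m + (r0 m - 1) := by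
    push_cast
    linear_combination -h2m
  have hr2 : (((e - 2 * m : ℤ) : ℝ) * r0 m) = (e : ℝ) * r0 m - 1 := by
    push_cast
    linear_combination -h2m
  have hr3 : (-((k + (j + 1) : ℕ) : ℝ)) = -((k + j : ℕ) : ℝ) - 1 := by push_cast; ring
  rw [hr1, hr2, hr3, Real.rpow_add hQpos]
  simp only [qd, ContinuousLinearMap.add_apply, ContinuousLinearMap.smul_apply,
    ContinuousLinearMap.coe_smul', Pi.smul_apply, smul_eq_mul, Pi.mul_apply]
  push_cast
  ring

theorem tval_hasFDerivAt (hm : 1 ≤ m) (hlam : 0 < lam) {t : TD n}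
    (ht : Differentiable ℝ t.p) {μ : ℝ} (hμ : 0 < μ) (k : ℕ) (ξ : EuclideanSpace ℝ (Fin n)) :
    ∃ D : EuclideanSpace ℝ (Fin n) →L[ℝ] ℝ, HasFDerivAt (tval m lam μ k t) D ξ ∧
      ∀ i : Fin n, D (EuclideanSpace.single i (1 : ℝ)) =
        ((stepTD m lam i t).map fun t' => tval m lam μ k t' ξ).sum := by
  obtain ⟨D, hD, hval⟩ := term_hasFDerivAt hm hlam ht hμ k t.j t.e ξ
  refine ⟨t.c k • D, hD.const_mul (t.c k), fun i => ?_⟩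
  simp only [ContinuousLinearMap.smul_apply, smul_eq_mul, hval i, stepTD, List.map_cons,
    List.map_nil, List.sum_cons, List.sum_nil, tval]
  ring

theorem stepTD_good (hm : 1 ≤ m) {s : ℕ} {t : TD n} (ht : Good s t) (i : Fin n) :
    ∀ t' ∈ stepTD m lam i t, Good (s + 1) t' := by
  obtain ⟨⟨B, hB, hc⟩, hpoly, hdeg⟩ := ht
  have hr0 : 0 ≤ r0 m := r0_nonneg
  intro t' ht'
  simp only [stepTD, List.mem_cons, List.not_mem_nil, or_false] at ht'
  rcases ht' with rfl | rfl | rfl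
  · refine ⟨⟨B * (t.j + 1) * r0 m, by positivity, fun k hk => ?_⟩,
      hpoly.mul (isPoly_qd i), by push_cast; omega⟩
    have hk1 : (1:ℝ) ≤ (k:ℝ) := by exact_mod_cast hk
    have h1 : |(-((k : ℝ) + t.j) * r0 m) * t.c k| = ((k:ℝ) + t.j) * r0 m * |t.c k| := by
      rw [abs_mul, abs_mul]
      rw [abs_neg, abs_of_nonneg (by positivity : (0:ℝ) ≤ (k:ℝ) + t.j), abs_of_nonneg hr0]
    rw [h1, pow_succ]
    have h2 : ((k:ℝ) + t.j) ≤ (k:ℝ) * (t.j + 1) := by nlinarith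
    have h3 : |t.c k| ≤ B * (k:ℝ) ^ t.j := hc k hk
    have h4 : (0:ℝ) ≤ (k:ℝ) ^ t.j := by positivity
    nlinarith [abs_nonneg (t.c k), mul_le_mul h2 h3 (abs_nonneg _) (by positivity : (0:ℝ) ≤ (k:ℝ) * (t.j+1))]
  · exact ⟨⟨B, hB, hc⟩, hpoly.fderiv_apply i, by push_cast; omega⟩
  · refine ⟨⟨|(t.e : ℝ) * r0 m| * B, by positivity, fun k hk => ?_⟩,
      hpoly.mul (isPoly_qd i), by push_cast; omega⟩
    rw [abs_mul]
    calc |(t.e:ℝ) * r0 m| * |t.c k| ≤ |(t.e:ℝ) * r0 m| * (B * (k:ℝ) ^ t.j) :=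
          mul_le_mul_of_nonneg_left (hc k hk) (abs_nonneg _)
      _ = |(t.e:ℝ) * r0 m| * B * (k:ℝ) ^ t.j := by ring

theorem list_sum_hasFDerivAt (hm : 1 ≤ m) (hlam : 0 < lam) {μ : ℝ} (hμ : 0 < μ) (k : ℕ)
    (l : List (TD n)) (hl : ∀ t ∈ l, Differentiable ℝ t.p) (ξ : EuclideanSpace ℝ (Fin n)) :
    ∃ D : EuclideanSpace ℝ (Fin n) →L[ℝ] ℝ,
      HasFDerivAt (fun ξ => (l.map fun t => tval m lam μ k t ξ).sum) D ξ ∧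
      ∀ i : Fin n, D (EuclideanSpace.single i (1 : ℝ)) =
        ((l.flatMap (stepTD m lam i)).map fun t' => tval m lam μ k t' ξ).sum := by
  induction l with
  | nil =>
      refine ⟨0, ?_, fun i => by simp⟩
      simpa using hasFDerivAt_const (0:ℝ) ξ
  | cons t l ih =>
      obtain ⟨D1, hD1, hv1⟩ := tval_hasFDerivAt hm hlam (hl t (by simp)) hμ k ξ
      obtain ⟨D2, hD2, hv2⟩ := ih (fun t' ht' => hl t' (by simp [ht']))
      refine ⟨D1 + D2, ?_, fun i => ?_⟩
      · simpa only [List.map_cons, List.sum_cons] using hD1.fun_add hD2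
      · simp only [ContinuousLinearMap.add_apply, hv1 i, hv2 i, List.flatMap_cons,
          List.map_append, List.sum_append]

theorem Rep.step (hm : 1 ≤ m) (hlam : 0 < lam) {s : ℕ}
    {F : ℝ → ℕ → EuclideanSpace ℝ (Fin n) → ℝ} (h : Rep m lam s F) (i : Fin n) :
    Rep m lam (s + 1) (fun μ k ξ => fderiv ℝ (F μ k) ξ (EuclideanSpace.single i (1:ℝ))) := by
  obtain ⟨l, hg, hf⟩ := h
  refine ⟨l.flatMap (stepTD m lam i), fun t' ht' => ?_, fun μ hμ k hk ξ => ?_⟩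
  · rw [List.mem_flatMap] at ht'
    obtain ⟨t, htl, ht'⟩ := ht'
    exact stepTD_good hm (hg t htl) i t' ht'
  · show fderiv ℝ (F μ k) ξ (EuclideanSpace.single i (1:ℝ)) = _
    have hFeq : F μ k = fun ξ => (l.map fun t => tval m lam μ k t ξ).sum :=
      funext (hf μ hμ k hk)
    rw [hFeq]
    obtain ⟨D, hD, hval⟩ := list_sum_hasFDerivAt hm hlam hμ k l
      (fun t htl => (hg t htl).2.1.differentiable) ξ
    rw [hD.fderiv]
    exact hval i

theorem Rep.iterate (hm : 1 ≤ m) (hlam : 0 < lam) {s : ℕ}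
    {F : ℝ → ℕ → EuclideanSpace ℝ (Fin n) → ℝ} (h : Rep m lam s F) (i : Fin n) (r : ℕ) :
    Rep m lam (s + r) (fun μ k =>
      (fun (h : EuclideanSpace ℝ (Fin n) → ℝ) (x : EuclideanSpace ℝ (Fin n)) =>
        fderiv ℝ h x (EuclideanSpace.single i (1:ℝ)))^[r] (F μ k)) := by
  induction r with
  | zero => simpa using h
  | succ r ih =>
      have h2 := ih.step hm hlam i
      simp only [Function.iterate_succ_apply']
      exact h2

theorem Rep.foldr (hm : 1 ≤ m) (hlam : 0 < lam) (β : Fin n → ℕ) {s : ℕ}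
    {F : ℝ → ℕ → EuclideanSpace ℝ (Fin n) → ℝ} (h : Rep m lam s F) (L : List (Fin n)) :
    Rep m lam (s + (L.map β).sum) (fun μ k =>
      L.foldr (fun i g =>
        (fun (h : EuclideanSpace ℝ (Fin n) → ℝ) (x : EuclideanSpace ℝ (Fin n)) =>
          fderiv ℝ h x (EuclideanSpace.single i (1:ℝ)))^[β i] g) (F μ k)) := by
  induction L with
  | nil => simpa using h
  | cons i L ih =>
      have h2 := ih.iterate hm hlam i (β i)
      simp only [List.map_cons, List.sum_cons, List.foldr_cons]
      rw [show s + (β i + (L.map β).sum) = s + (L.map β).sum + β i by omega]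
      exact h2

theorem base_rep (hm : 1 ≤ m) (hlam : 0 < lam) :
    Rep (n := n) m lam 0 (fun μ k => fun ζ =>
      μ ^ k * ((μ + (lam + (‖ζ‖ ^ 2) ^ m) ^ ((2 * (m : ℝ)))⁻¹) ^ k)⁻¹) := by
  refine ⟨[⟨fun _ => 1, 0, fun _ => 1, 0, 0⟩], ?_, ?_⟩
  · intro t ht
    simp only [List.mem_singleton] at ht
    subst ht
    exact ⟨⟨1, zero_le_one, fun k hk => by simp⟩, IsPoly.const 1, by simp⟩
  · intro μ hμ k hk ξ
    have hAf : (lam + (‖ξ‖ ^ 2) ^ m) ^ ((2 * (m : ℝ)))⁻¹ = Af m lam ξ := by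
      rw [norm_sq_sum]
      rfl
    have hpos : 0 < μ + Af m lam ξ := add_pos hμ (Af_pos hlam ξ)
    simp only [tval, List.map_cons, List.map_nil, List.sum_cons, List.sum_nil, hAf]
    rw [Real.rpow_neg hpos.le, Real.rpow_natCast]
    simp

theorem zpow_anti_of_nonpos {a b : ℝ} (ha : 0 < a) (hab : a ≤ b) {w : ℤ} (hw : w ≤ 0) :
    b ^ w ≤ a ^ w := by
  have hb : 0 < b := lt_of_lt_of_le ha hab
  obtain ⟨r, rfl⟩ : ∃ r : ℕ, w = -(r : ℤ) := ⟨(-w).toNat, by omega⟩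
  rw [zpow_neg, zpow_neg, zpow_natCast, zpow_natCast]
  gcongr

theorem key_pow {μ A : ℝ} (hμ : 0 < μ) (hA : 0 < A) (k j : ℕ) (hk : 1 ≤ k) :
    μ ^ k * (μ + A) ^ (-((k + j : ℕ) : ℝ)) ≤ (j.factorial : ℝ) / ((k : ℝ) ^ j * A ^ j) := by
  have hMA : 0 < μ + A := by linarith
  have hkR : (0:ℝ) < (k:ℝ) := by exact_mod_cast lt_of_lt_of_le one_pos hk
  rw [Real.rpow_neg hMA.le, Real.rpow_natCast, le_div_iff₀ (by positivity)]
  set t : ℝ := A / (μ + A) with ht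
  have ht0 : 0 < t := by positivity
  have ht1 : t < 1 := by rw [ht, div_lt_one hMA]; linarith
  have hμA : μ / (μ + A) = 1 - t := by rw [ht]; field_simp; ring
  have e1 : μ ^ k * ((μ + A) ^ (k + j))⁻¹ * ((k:ℝ) ^ j * A ^ j) = (1 - t) ^ k * ((k:ℝ) * t) ^ j := by
    rw [← hμA, ht, mul_pow, div_pow, div_pow, pow_add]
    field_simp
  rw [e1]
  have e2 : (1 - t) ^ k ≤ Real.exp (-((k:ℝ) * t)) := by
    have h3 : 1 - t ≤ Real.exp (-t) := by linarith [Real.add_one_le_exp (-t)]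
    calc (1 - t) ^ k ≤ (Real.exp (-t)) ^ k := pow_le_pow_left₀ (by linarith) h3 k
      _ = Real.exp (-((k:ℝ) * t)) := by rw [← Real.exp_nat_mul]; ring_nf
  have e3 : ((k:ℝ) * t) ^ j ≤ (j.factorial : ℝ) * Real.exp ((k:ℝ) * t) := by
    have h4 : ((k:ℝ) * t) ^ j / (j.factorial : ℝ) ≤ Real.exp ((k:ℝ) * t) := by
      refine le_trans ?_ (Real.sum_le_exp_of_nonneg (by positivity) (j + 1))
      exact Finset.single_le_sum (f := fun i => ((k:ℝ) * t) ^ i / i.factorial)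
        (fun i _ => by positivity) (Finset.mem_range.mpr (Nat.lt_succ_self j))
    have hjf : (0:ℝ) < (j.factorial : ℝ) := by exact_mod_cast j.factorial_pos
    calc ((k:ℝ) * t) ^ j = (((k:ℝ) * t) ^ j / (j.factorial : ℝ)) * (j.factorial : ℝ) := by
          field_simp
      _ ≤ Real.exp ((k:ℝ) * t) * (j.factorial : ℝ) :=
          mul_le_mul_of_nonneg_right h4 hjf.le
      _ = (j.factorial : ℝ) * Real.exp ((k:ℝ) * t) := mul_comm _ _
  calc (1 - t) ^ k * ((k:ℝ) * t) ^ j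
      ≤ Real.exp (-((k:ℝ) * t)) * ((j.factorial : ℝ) * Real.exp ((k:ℝ) * t)) :=
        mul_le_mul e2 e3 (by positivity) (by positivity)
    _ = (j.factorial : ℝ) := by
        rw [mul_comm (j.factorial : ℝ), ← mul_assoc, ← Real.exp_add]
        simp

theorem tval_bound (hm : 1 ≤ m) (hlam : 0 < lam) (α : Fin n → ℕ) {t : TD n}
    (ht : Good (∑ i, α i) t) :
    ∃ C, 0 ≤ C ∧ ∀ μ : ℝ, 0 < μ → ∀ k : ℕ, 1 ≤ k → ∀ ξ : EuclideanSpace ℝ (Fin n),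
      |(∏ i, ξ i ^ α i) * tval m lam μ k t ξ| ≤ C := by
  obtain ⟨⟨B, hB, hc⟩, hpoly, hdeg⟩ := ht
  by_cases hdneg : t.d < 0
  · refine ⟨0, le_refl 0, fun μ hμ k hk ξ => ?_⟩
    have h0 := hpoly.eq_zero_of_neg hdneg ξ
    simp [tval, h0]
  push_neg at hdneg
  obtain ⟨Cp, hCp, hCpb⟩ := hpoly.bound
  set s : ℕ := ∑ i, α i with hs
  set a0 : ℝ := lam ^ r0 m with ha0
  have ha0pos : 0 < a0 := Real.rpow_pos_of_pos hlam _
  set c0 : ℝ := a0⁻¹ + 1 with hc0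
  have hc0pos : 0 < c0 := by positivity
  set w : ℤ := t.d + t.e + (s : ℤ) - t.j with hw
  have hw0 : w ≤ 0 := by omega
  refine ⟨B * Cp * (t.j.factorial : ℝ) * c0 ^ t.d.toNat * a0 ^ w, ?_, fun μ hμ k hk ξ => ?_⟩
  · have h1 : (0:ℝ) ≤ a0 ^ w := (zpow_pos ha0pos w).le
    have h2 : (0:ℝ) ≤ c0 ^ t.d.toNat := (pow_pos hc0pos _).le
    have h3 : (0:ℝ) ≤ (t.j.factorial : ℝ) := by positivity
    positivity
  · set A : ℝ := Af m lam ξ with hA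
    have hApos : 0 < A := Af_pos hlam ξ
    have hMApos : 0 < μ + A := add_pos hμ hApos
    have hkR : (0:ℝ) < (k:ℝ) := by exact_mod_cast lt_of_lt_of_le one_pos hk
    have hXnn : 0 ≤ μ ^ k * (μ + A) ^ (-((k + t.j : ℕ) : ℝ)) :=
      mul_nonneg (pow_nonneg hμ.le k) (Real.rpow_nonneg hMApos.le _)
    have habs : |(∏ i, ξ i ^ α i) * tval m lam μ k t ξ|
        = |∏ i, ξ i ^ α i| * |t.c k| * (μ ^ k * (μ + A) ^ (-((k + t.j : ℕ) : ℝ))) *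
            |t.p ξ| * A ^ t.e := by
      have h1 : tval m lam μ k t ξ
          = t.c k * (μ ^ k * (μ + A) ^ (-((k + t.j : ℕ) : ℝ)) * t.p ξ * A ^ t.e) := by
        rw [tval, Q_rpow_eq hlam]
      rw [h1, abs_mul, abs_mul, abs_mul, abs_mul,
        abs_of_nonneg hXnn, abs_of_nonneg (zpow_pos hApos t.e).le]
      ring
    have hprod : |∏ i, ξ i ^ α i| ≤ A ^ s := by
      rw [Finset.abs_prod]
      have h1 : ∀ i ∈ Finset.univ, |ξ i ^ α i| ≤ A ^ α i := by
        intro i _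
        rw [abs_pow]
        exact pow_le_pow_left₀ (abs_nonneg _)
          ((abs_coord_le_norm ξ i).trans (norm_le_Af hm hlam ξ)) _
      calc ∏ i, |ξ i ^ α i| ≤ ∏ i, A ^ α i :=
            Finset.prod_le_prod (fun i _ => abs_nonneg _) h1
        _ = A ^ s := by rw [← Finset.prod_pow_eq_pow_sum]
    have hkey := key_pow hμ hApos k t.j hk
    have hbase : 1 + ‖ξ‖ ≤ c0 * A := by
      have h1 : a0 ≤ A := a0_le_Af hlam ξ
      have h2 : ‖ξ‖ ≤ A := norm_le_Af hm hlam ξ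
      have h3 : a0⁻¹ * a0 = 1 := inv_mul_cancel₀ ha0pos.ne'
      have h4 : a0⁻¹ * a0 ≤ a0⁻¹ * A := by
        exact mul_le_mul_of_nonneg_left h1 (by positivity)
      rw [hc0]
      nlinarith
    have hp' : |t.p ξ| ≤ Cp * (c0 * A) ^ t.d.toNat := by
      refine (hCpb ξ).trans ?_
      have h1 : (1 + ‖ξ‖ : ℝ) ^ t.d = (1 + ‖ξ‖ : ℝ) ^ t.d.toNat := by
        rw [← zpow_natCast (1 + ‖ξ‖ : ℝ) t.d.toNat]
        congr 1
        omega
      rw [h1]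
      refine mul_le_mul_of_nonneg_left ?_ hCp
      exact pow_le_pow_left₀ (by positivity) hbase _
    have hAe : (0:ℝ) ≤ A ^ t.e := (zpow_pos hApos t.e).le
    have hAcollect : (A:ℝ) ^ s * A ^ t.d.toNat * A ^ t.e / A ^ t.j = A ^ w := by
      rw [← zpow_natCast A s, ← zpow_natCast A t.d.toNat, ← zpow_natCast A t.j,
        div_eq_mul_inv, ← zpow_neg, ← zpow_add₀ hApos.ne', ← zpow_add₀ hApos.ne',
        ← zpow_add₀ hApos.ne']
      congr 1
      omega
    calc |(∏ i, ξ i ^ α i) * tval m lam μ k t ξ|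
        = |∏ i, ξ i ^ α i| * |t.c k| * (μ ^ k * (μ + A) ^ (-((k + t.j : ℕ) : ℝ))) *
            |t.p ξ| * A ^ t.e := habs
      _ ≤ A ^ s * (B * (k:ℝ) ^ t.j) * ((t.j.factorial : ℝ) / ((k:ℝ) ^ t.j * A ^ t.j)) *
            (Cp * (c0 * A) ^ t.d.toNat) * A ^ t.e := by
          have hc' := hc k hk
          have h5 : (0:ℝ) ≤ A ^ s := (pow_pos hApos s).le
          have h6 : (0:ℝ) ≤ B * (k:ℝ) ^ t.j := by positivity
          have h7 : (0:ℝ) ≤ (t.j.factorial : ℝ) / ((k:ℝ) ^ t.j * A ^ t.j) := by positivity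
          gcongr
      _ = B * Cp * (t.j.factorial : ℝ) * c0 ^ t.d.toNat *
            ((A:ℝ) ^ s * A ^ t.d.toNat * A ^ t.e / A ^ t.j) * ((k:ℝ) ^ t.j / (k:ℝ) ^ t.j) := by
          rw [mul_pow]
          ring
      _ = B * Cp * (t.j.factorial : ℝ) * c0 ^ t.d.toNat * A ^ w := by
          rw [hAcollect, div_self (pow_ne_zero _ hkR.ne'), mul_one]
      _ ≤ B * Cp * (t.j.factorial : ℝ) * c0 ^ t.d.toNat * a0 ^ w := by
          refine mul_le_mul_of_nonneg_left
            (zpow_anti_of_nonpos ha0pos (a0_le_Af hlam ξ) hw0) ?_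
          positivity

theorem list_bound (α : Fin n → ℕ) (l : List (TD n))
    (hl : ∀ t ∈ l, ∃ C, 0 ≤ C ∧ ∀ μ : ℝ, 0 < μ → ∀ k : ℕ, 1 ≤ k →
      ∀ ξ : EuclideanSpace ℝ (Fin n), |(∏ i, ξ i ^ α i) * tval m lam μ k t ξ| ≤ C) :
    ∃ C, 0 ≤ C ∧ ∀ μ : ℝ, 0 < μ → ∀ k : ℕ, 1 ≤ k → ∀ ξ : EuclideanSpace ℝ (Fin n),
      |(∏ i, ξ i ^ α i) * (l.map fun t => tval m lam μ k t ξ).sum| ≤ C := by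
  induction l with
  | nil => exact ⟨0, le_refl 0, fun μ hμ k hk ξ => by simp⟩
  | cons t l ih =>
      obtain ⟨C₁, hC₁, h₁⟩ := hl t (by simp)
      obtain ⟨C₂, hC₂, h₂⟩ := ih (fun t' ht' => hl t' (by simp [ht']))
      refine ⟨C₁ + C₂, by positivity, fun μ hμ k hk ξ => ?_⟩
      simp only [List.map_cons, List.sum_cons, mul_add]
      exact (abs_add_le _ _).trans (add_le_add (h₁ μ hμ k hk ξ) (h₂ μ hμ k hk ξ))

end Main

end Stmt16Aux

/-- Mikhlin-type estimates, uniform in `k` and `μ`, for the powers of the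
resolvent symbol of `(λ + (−Δ)^m)^{1/(2m)}`: for every multi-index `α` there is `C_α > 0`
such that `|ξ^α ∂_ξ^α (μ^k (μ + (λ + |ξ|^{2m})^{1/(2m)})^{−k})| ≤ C_α` for all `k ≥ 1`,
`μ > 0` and `ξ ∈ ℝ^n`. -/
theorem stmt16 (n m : ℕ) (hn : 1 ≤ n) (hm : 1 ≤ m) (lam : ℝ) (hlam : 0 < lam) :
    ∀ α : Fin n → ℕ, ∃ C > 0, ∀ k : ℕ, 1 ≤ k → ∀ μ : ℝ, 0 < μ →
      ∀ ξ : EuclideanSpace ℝ (Fin n),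
        |(∏ i, ξ i ^ α i) *
            mderivE α (fun ζ : EuclideanSpace ℝ (Fin n) =>
              μ ^ k * ((μ + (lam + (‖ζ‖ ^ 2) ^ m) ^ ((2 * (m : ℝ)))⁻¹) ^ k)⁻¹) ξ|
          ≤ C := by
  intro α
  have hbase := Stmt16Aux.base_rep (n := n) (m := m) (lam := lam) hm hlam
  have hrep := hbase.foldr hm hlam α (List.finRange n)
  have hs : (0 + ((List.finRange n).map α).sum) = ∑ i, α i := by
    rw [Fin.sum_univ_def, Nat.zero_add]
  rw [hs] at hrep
  obtain ⟨l, hg, hf⟩ := hrep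
  obtain ⟨C, hC0, hCb⟩ := Stmt16Aux.list_bound α l
    (fun t htl => Stmt16Aux.tval_bound hm hlam α (hg t htl))
  refine ⟨C + 1, by linarith, fun k hk μ hμ ξ => ?_⟩
  have heq := hf μ hμ k hk ξ
  have hmd : mderivE α (fun ζ : EuclideanSpace ℝ (Fin n) =>
      μ ^ k * ((μ + (lam + (‖ζ‖ ^ 2) ^ m) ^ ((2 * (m : ℝ)))⁻¹) ^ k)⁻¹) ξ
      = (l.map fun t => Stmt16Aux.tval m lam μ k t ξ).sum := heq
  rw [hmd]
  linarith [hCb μ hμ k hk ξ]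

end
end
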